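/- Let f be a real-valued function on size-N datasets, β > 0, and suppose the β-smooth sensitivity S*_{f,β} is finite and strictly positive at every dataset. Let ε, δ ∈ (0,1), let c be any constant with c² > 2 ln(1.25/δ), and let σ ≥ c·β/ε. Then the randomized mechanism M that on input D outputs M(D) = exp( ln S*_{f,β}(D) + z − σ²/2 ), where z is a Gaussian random variable with mean 0 and variance σ², satisfies (ε, δ)-differential privacy: for all neighboring datasets D, D′ and all measurable sets S ⊆ ℝ, P[M(D) ∈ S] ≤ e^ε · P[M(D′) ∈ S] + δ. -/

import Mathlib

set_option maxHeartbeats 1000000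

/-!
Statement 5: the mechanism `M(D) = exp( ln S*_{f,β}(D) + z − σ²/2 )` with
`z ~ N(0, σ²)`, `σ ≥ c·β/ε` and `c² > 2 ln(1.25/δ)`, is (ε, δ)-differentially
private (for ε, δ ∈ (0,1)), provided the β-smooth sensitivity `S*_{f,β}` is finite
and strictly positive at every dataset.
-/

namespace SmoothSens

variable {N : ℕ} {α : Type} [DecidableEq α]

/-- Local sensitivity of `f` at `D`: `sup` of `|f D − f D′|` over `D′` at Hamming
distance 1 from `D`. -/
noncomputable def LS (f : (Fin N → α) → ℝ) (D : Fin N → α) : ℝ :=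
  ⨆ D' : {D' : Fin N → α // hammingDist D D' = 1}, |f D - f D'.1|

/-- β-smooth sensitivity of `f` at `D`:
`S*_{f,β}(D) = sup over all D′ of LS_f(D′)·exp(−β·d(D,D′))`. -/
noncomputable def Sstar (f : (Fin N → α) → ℝ) (β : ℝ) (D : Fin N → α) : ℝ :=
  ⨆ D' : Fin N → α, LS f D' * Real.exp (-β * (hammingDist D D' : ℝ))

/-- The randomized mechanism `M(D) = exp( ln S*_{f,β}(D) + z − σ²/2 )`, `z ~ N(0,σ²)`,
viewed as the law (a measure on ℝ) of its output: the pushforward of the Gaussian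
measure `N(0, σ²)` under `z ↦ exp( ln S*_{f,β}(D) + z − σ²/2 )`. -/
noncomputable def privSmoothSensMech (f : (Fin N → α) → ℝ) (β σ : ℝ) (D : Fin N → α) :
    MeasureTheory.Measure ℝ :=
  (ProbabilityTheory.gaussianReal 0 (Real.toNNReal (σ ^ 2))).map
    fun z => Real.exp (Real.log (Sstar f β D) + z - σ ^ 2 / 2)

end SmoothSens

/-! ### Auxiliary lemmas -/

open scoped NNReal ENNReal
open MeasureTheory ProbabilityTheory Real Set

namespace SmoothSensDP

lemma gauss_neg (v : ℝ≥0) : (gaussianReal 0 v).map (fun z => -z) = gaussianReal 0 v := by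
  have h := gaussianReal_map_const_mul (μ := 0) (v := v) (-1)
  simp only [neg_one_mul, mul_zero] at h
  rw [h]
  congr 1
  ext
  norm_num

lemma gauss_Iio (v : ℝ≥0) (s : ℝ) : (gaussianReal 0 v) (Iio s) = (gaussianReal 0 v) (Ioi (-s)) := by
  conv_rhs => rw [← gauss_neg v]
  rw [Measure.map_apply measurable_neg measurableSet_Ioi]
  congr 1
  ext z
  simp [lt_neg]

lemma gauss_Ioi_zero (v : ℝ≥0) : (gaussianReal 0 v) (Ioi (0:ℝ)) ≤ 1/2 := by
  have hs : (gaussianReal 0 v) (Iio (0:ℝ)) = (gaussianReal 0 v) (Ioi (0:ℝ)) := by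
    rw [gauss_Iio]; norm_num
  have hd : (gaussianReal 0 v) (Ioi (0:ℝ)) + (gaussianReal 0 v) (Iio (0:ℝ)) ≤ 1 := by
    rw [← measure_union (by rw [Set.disjoint_left]; intro a h1 h2; exact absurd (mem_Iio.1 h2) (not_lt.2 (le_of_lt (mem_Ioi.1 h1)))) measurableSet_Iio]
    calc _ ≤ (gaussianReal 0 v) univ := measure_mono (subset_univ _)
    _ = 1 := measure_univ
  rw [hs] at hd
  by_contra hlt
  push_neg at hlt
  rw [← ENNReal.add_halves 1] at hd
  exact absurd hd (not_le.2 (ENNReal.add_lt_add hlt hlt))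

lemma gauss_tail (v : ℝ≥0) (hv : v ≠ 0) (r : ℝ) (hr : 0 < r) :
    gaussianReal 0 v (Ioi r) ≤
      ENNReal.ofReal ((Real.sqrt (2*π*(v:ℝ)))⁻¹ * ((v:ℝ) / r) * Real.exp (-r^2/(2*(v:ℝ)))) := by
  have hv0 : (0:ℝ) < (v:ℝ) := lt_of_le_of_ne v.2 (by exact_mod_cast (Ne.symm hv))
  set C : ℝ := (Real.sqrt (2*π*(v:ℝ)))⁻¹ with hC
  have hCpos : 0 < C := by positivity
  set g : ℝ → ℝ := fun x => -(C * ((v:ℝ)/r) * Real.exp (-x^2/(2*(v:ℝ)))) with hg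
  set g' : ℝ → ℝ := fun x => C * (x/r) * Real.exp (-x^2/(2*(v:ℝ))) with hg'
  have hfun : g = fun y => -(C * ((v:ℝ)/r)) * Real.exp (-y^2/(2*(v:ℝ))) := by
    funext y; rw [hg]; ring
  have hderiv : ∀ x ∈ Ici r, HasDerivAt g (g' x) x := by
    intro x _
    have h1 : HasDerivAt (fun x : ℝ => -x^2/(2*(v:ℝ))) (-(2*x)/(2*(v:ℝ))) x := by
      have := ((hasDerivAt_pow 2 x).neg).div_const (2*(v:ℝ))
      simpa using this
    have h2 := (h1.exp).const_mul (-(C * ((v:ℝ)/r)))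
    rw [hfun, hg']
    refine h2.congr_deriv ?_
    show _ = C * (x/r) * Real.exp (-x^2/(2*(v:ℝ)))
    field_simp
  have hpos : ∀ x ∈ Ioi r, 0 ≤ g' x := by
    intro x hx
    have : 0 < x := lt_trans hr hx
    positivity
  have htend : Filter.Tendsto g Filter.atTop (nhds 0) := by
    rw [hg]
    have : Filter.Tendsto (fun x : ℝ => Real.exp (-x^2/(2*(v:ℝ)))) Filter.atTop (nhds 0) := by
      apply Real.tendsto_exp_atBot.comp
      apply Filter.Tendsto.atBot_div_const (by positivity)
      exact Filter.tendsto_neg_atTop_atBot.comp (Filter.tendsto_pow_atTop two_ne_zero)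
    simpa using (this.const_mul (C * ((v:ℝ)/r))).neg
  have hint : IntegrableOn g' (Ioi r) := integrableOn_Ioi_deriv_of_nonneg' hderiv hpos htend
  have hval : ∫ x in Ioi r, g' x = C * ((v:ℝ)/r) * Real.exp (-r^2/(2*(v:ℝ))) := by
    rw [integral_Ioi_of_hasDerivAt_of_nonneg' hderiv hpos htend]
    simp [hg]
  rw [gaussianReal_apply_eq_integral _ hv]
  apply ENNReal.ofReal_le_ofReal
  rw [← hval]
  apply setIntegral_mono_on (integrable_gaussianPDFReal 0 v).restrict hint measurableSet_Ioi
  intro x hx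
  have hxr : r ≤ x := le_of_lt hx
  have h1x : 1 ≤ x / r := (one_le_div hr).2 hxr
  simp only [gaussianPDFReal, sub_zero, hg', ← hC]
  calc C * Real.exp (-x^2/(2*(v:ℝ))) ≤ (x/r) * (C * Real.exp (-x^2/(2*(v:ℝ)))) := by
        nlinarith [mul_pos hCpos (Real.exp_pos (-x^2/(2*(v:ℝ)))), h1x]
    _ = C * (x/r) * Real.exp (-x^2/(2*(v:ℝ))) := by ring

lemma gauss_interval (v : ℝ≥0) (hv : v ≠ 0) (a b : ℝ) :
    gaussianReal 0 v (Ioc a b) ≤ ENNReal.ofReal ((Real.sqrt (2*π*(v:ℝ)))⁻¹ * (b - a)) := by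
  have hv0 : (0:ℝ) < (v:ℝ) := lt_of_le_of_ne v.2 (by exact_mod_cast (Ne.symm hv))
  rcases le_or_gt b a with hba | hab
  · rw [Set.Ioc_eq_empty (by exact not_lt.2 hba)]
    simp
  rw [gaussianReal_apply _ hv]
  calc ∫⁻ x in Ioc a b, gaussianPDF 0 v x
      ≤ ∫⁻ _ in Ioc a b, ENNReal.ofReal ((Real.sqrt (2*π*(v:ℝ)))⁻¹) := by
        apply lintegral_mono
        intro x
        apply ENNReal.ofReal_le_ofReal
        rw [gaussianPDFReal, sub_zero]
        have : Real.exp (-x^2/(2*(v:ℝ))) ≤ 1 := by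
          rw [Real.exp_le_one_iff]
          have : (0:ℝ) ≤ x^2/(2*(v:ℝ)) := by positivity
          rw [neg_div]; linarith
        nlinarith [inv_nonneg.2 (Real.sqrt_nonneg (2*π*(v:ℝ)))]
    _ = ENNReal.ofReal ((Real.sqrt (2*π*(v:ℝ)))⁻¹) * volume (Ioc a b) := by
        rw [lintegral_const, Measure.restrict_apply_univ]
    _ = ENNReal.ofReal ((Real.sqrt (2*π*(v:ℝ)))⁻¹ * (b - a)) := by
        rw [Real.volume_Ioc, ← ENNReal.ofReal_mul (by positivity)]

lemma log_ge_one_sub_inv {x : ℝ} (hx : 0 < x) : 1 - 1/x ≤ Real.log x := by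
  have h := Real.log_le_sub_one_of_pos (show (0:ℝ) < 1/x by positivity)
  rw [Real.log_div one_ne_zero (ne_of_gt hx), Real.log_one] at h
  linarith

lemma gauss_Q_le {σ c δ : ℝ} (hσ : 0 < σ) (hc0 : 0 < c) (hδ : δ ∈ Set.Ioo (0:ℝ) 1)
    (hc : c^2 > 2 * Real.log (1.25/δ)) :
    ∀ s : ℝ, σ * (c - 1/(2*c)) ≤ s →
      gaussianReal 0 (Real.toNNReal (σ^2)) (Ioi s) ≤ ENNReal.ofReal δ := by
  intro s hs
  set v : ℝ≥0 := Real.toNNReal (σ^2) with hvdef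
  have hvr : (v:ℝ) = σ^2 := Real.coe_toNNReal _ (sq_nonneg σ)
  have hv : v ≠ 0 := by
    intro h
    rw [h] at hvr
    simp at hvr
    nlinarith
  have hδ0 : 0 < δ := hδ.1
  have hδ1 : δ < 1 := hδ.2
  have hδ125 : 1.25 * Real.exp (-(c^2)/2) < δ := by
    have h1 : Real.log (1.25/δ) < c^2/2 := by linarith
    have h2 : (1.25:ℝ)/δ < Real.exp (c^2/2) := by
      calc (1.25:ℝ)/δ = Real.exp (Real.log (1.25/δ)) :=
            (Real.exp_log (by positivity)).symm
        _ < Real.exp (c^2/2) := Real.exp_lt_exp.2 h1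
    rw [div_lt_iff₀ hδ0] at h2
    have h3 := Real.exp_pos (c^2/2)
    rw [neg_div, Real.exp_neg]
    rw [mul_comm] at h2
    calc 1.25 * (Real.exp (c^2/2))⁻¹ < (δ * Real.exp (c^2/2)) * (Real.exp (c^2/2))⁻¹ := by
          apply mul_lt_mul_of_pos_right h2 (by positivity)
      _ = δ := by field_simp
  have hsqrt2pi : (2.5:ℝ) ≤ Real.sqrt (2*π) := by
    rw [show (2.5:ℝ) = Real.sqrt (2.5^2) by rw [Real.sqrt_sq]; norm_num]
    apply Real.sqrt_le_sqrt
    nlinarith [Real.pi_gt_d6]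
  have hsqrtv : Real.sqrt (2*π*(v:ℝ)) = σ * Real.sqrt (2*π) := by
    rw [hvr, Real.sqrt_mul (by positivity), Real.sqrt_sq (le_of_lt hσ)]
    ring
  set x₀ : ℝ := c - 1/(2*c) with hx₀
  rcases le_or_gt (c^2) (2 * Real.log 2.5) with hcase | hcase
  · -- c small: δ > 1/2
    have hδhalf : 1/2 < δ := by
      have h1 : Real.exp (-(c^2)/2) ≥ Real.exp (-Real.log 2.5) := by
        apply Real.exp_le_exp.2
        rw [neg_div]
        linarith
      rw [Real.exp_neg, Real.exp_log (by norm_num)] at h1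
      nlinarith
    rcases le_or_gt 0 x₀ with hx0 | hx0
    · have hsub : Ioi s ⊆ Ioi (0:ℝ) := Ioi_subset_Ioi (by nlinarith)
      calc gaussianReal 0 v (Ioi s) ≤ gaussianReal 0 v (Ioi (0:ℝ)) := measure_mono hsub
        _ ≤ 1/2 := gauss_Ioi_zero v
        _ ≤ ENNReal.ofReal δ := by
            rw [show (1/2 : ℝ≥0∞) = ENNReal.ofReal (1/2) by
              rw [ENNReal.ofReal_div_of_pos two_pos, ENNReal.ofReal_one, ENNReal.ofReal_ofNat]]
            exact ENNReal.ofReal_le_ofReal (le_of_lt hδhalf)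
    · have h2c2 : 2*c^2 < 1 := by
        rw [hx₀] at hx0
        have h1 : c < 1/(2*c) := by linarith
        have h2 := mul_lt_mul_of_pos_right h1 (show (0:ℝ) < 2*c by positivity)
        rw [div_mul_cancel₀ _ (show (2:ℝ)*c ≠ 0 by positivity)] at h2
        nlinarith
      have hδbig : 0.9375 ≤ δ := by
        have h1 : Real.log (1.25/δ) < 1/4 := by nlinarith
        have h2 : (1.25:ℝ)/δ < Real.exp (1/4) := by
          calc (1.25:ℝ)/δ = Real.exp (Real.log (1.25/δ)) :=
                (Real.exp_log (by positivity)).symm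
            _ < Real.exp (1/4) := Real.exp_lt_exp.2 h1
        have h3 : Real.exp (1/4 : ℝ) * Real.exp (-(1/4) : ℝ) = 1 := by
          rw [← Real.exp_add]; norm_num
        have h4 : (3/4 : ℝ) ≤ Real.exp (-(1/4) : ℝ) := by
          have := Real.add_one_le_exp (-(1/4) : ℝ)
          linarith
        rw [div_lt_iff₀ hδ0] at h2
        nlinarith [Real.exp_pos (-(1/4):ℝ)]
      have hc63 : 0.63 ≤ c := by
        have hl : (0.2:ℝ) ≤ Real.log (1.25/δ) := by
          have h1 : (1.25:ℝ) ≤ 1.25/δ := by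
            rw [le_div_iff₀ hδ0]; nlinarith
          have h3 : Real.log 1.25 ≤ Real.log (1.25/δ) :=
            Real.log_le_log (by norm_num) h1
          have h4 := log_ge_one_sub_inv (show (0:ℝ) < 1.25 by norm_num)
          norm_num at h4
          linarith
        nlinarith
      have hmx0 : -x₀ ≤ 0.17 := by
        rw [hx₀]
        have : 1/(2*c) ≤ 1/(2*0.63) := by
          apply div_le_div_of_nonneg_left (by norm_num) (by norm_num) (by linarith)
        norm_num at this ⊢
        linarith
      have hσx0 : σ * x₀ ≤ 0 := by nlinarith
      have hsub : Ioi s ⊆ Ioi (σ * x₀) := Ioi_subset_Ioi hs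
      have hsplit : Ioi (σ * x₀) ⊆ Ioc (σ * x₀) 0 ∪ Ioi (0:ℝ) := by
        intro z hz
        rcases le_or_gt z 0 with h | h
        · exact Or.inl ⟨hz, h⟩
        · exact Or.inr h
      calc gaussianReal 0 v (Ioi s) ≤ gaussianReal 0 v (Ioc (σ * x₀) 0 ∪ Ioi (0:ℝ)) :=
            measure_mono (hsub.trans hsplit)
        _ ≤ gaussianReal 0 v (Ioc (σ * x₀) 0) + gaussianReal 0 v (Ioi (0:ℝ)) :=
            measure_union_le _ _
        _ ≤ ENNReal.ofReal ((Real.sqrt (2*π*(v:ℝ)))⁻¹ * (0 - σ * x₀)) + 1/2 :=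
            add_le_add (gauss_interval v hv _ _) (gauss_Ioi_zero v)
        _ ≤ ENNReal.ofReal δ := by
            rw [show (1/2 : ℝ≥0∞) = ENNReal.ofReal (1/2) by
              rw [ENNReal.ofReal_div_of_pos two_pos, ENNReal.ofReal_one, ENNReal.ofReal_ofNat]]
            rw [← ENNReal.ofReal_add
              (mul_nonneg (inv_nonneg.2 (Real.sqrt_nonneg _)) (by linarith)) (by norm_num)]
            apply ENNReal.ofReal_le_ofReal
            have hb : (Real.sqrt (2*π*(v:ℝ)))⁻¹ * (0 - σ * x₀) ≤ 0.068 := by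
              rw [hsqrtv]
              have h1 : (0:ℝ) - σ * x₀ = σ * (-x₀) := by ring
              rw [h1]
              have hσs : (2.5:ℝ) * σ ≤ σ * Real.sqrt (2*π) := by nlinarith
              have hinv : (σ * Real.sqrt (2*π))⁻¹ ≤ (2.5 * σ)⁻¹ := by
                apply inv_anti₀ (by positivity) hσs
              calc (σ * Real.sqrt (2*π))⁻¹ * (σ * (-x₀)) ≤ (2.5*σ)⁻¹ * (σ * 0.17) := by
                    apply mul_le_mul hinv (by nlinarith) (by nlinarith) (by positivity)
                _ = 0.17/2.5 := by field_simp
                _ ≤ 0.068 := by norm_num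
            linarith
  · -- c large: use the tail bound
    have hc2 : (1.2:ℝ) < c^2 := by
      have h1 : (0.6:ℝ) ≤ Real.log 2.5 := by
        have := log_ge_one_sub_inv (show (0:ℝ) < 2.5 by norm_num)
        norm_num at this
        linarith
      linarith
    have hc109 : 1.09 ≤ c := by nlinarith
    have hx063 : 0.63 ≤ x₀ := by
      rw [hx₀]
      have h1 : 1/(2*c) ≤ 1/(2*1.09) := by
        apply div_le_div_of_nonneg_left (by norm_num) (by norm_num) (by linarith)
      norm_num at h1 ⊢
      linarith
    have hr : 0 < σ * x₀ := by positivity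
    have hsub : Ioi s ⊆ Ioi (σ * x₀) := Ioi_subset_Ioi hs
    calc gaussianReal 0 v (Ioi s) ≤ gaussianReal 0 v (Ioi (σ * x₀)) := measure_mono hsub
      _ ≤ ENNReal.ofReal ((Real.sqrt (2*π*(v:ℝ)))⁻¹ * ((v:ℝ) / (σ*x₀)) *
            Real.exp (-(σ*x₀)^2/(2*(v:ℝ)))) := gauss_tail v hv _ hr
      _ ≤ ENNReal.ofReal δ := by
          apply ENNReal.ofReal_le_ofReal
          rw [hsqrtv, hvr]
          have heq : (σ * Real.sqrt (2*π))⁻¹ * (σ^2/(σ*x₀)) = (Real.sqrt (2*π) * x₀)⁻¹ := by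
            field_simp
          have heq2 : -(σ*x₀)^2/(2*σ^2) = -(x₀^2)/2 := by
            field_simp
          rw [heq, heq2]
          have he1 : Real.exp (-(x₀^2)/2) ≤ Real.exp (1/2) * Real.exp (-(c^2)/2) := by
            rw [← Real.exp_add, Real.exp_le_exp]
            have : x₀^2 = c^2 - 1 + 1/(4*c^2) := by
              rw [hx₀]
              field_simp
              ring
            nlinarith [this, one_div_pos.2 (show (0:ℝ) < 4*c^2 by positivity)]
          have he2 : Real.exp ((1:ℝ)/2) ≤ 1.65 := by
            nlinarith [Real.exp_one_lt_d9, Real.exp_pos ((1:ℝ)/2),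
              (Real.exp_add (1/2) (1/2)).symm, Real.exp_pos (1:ℝ)]
          have hinv : (Real.sqrt (2*π) * x₀)⁻¹ ≤ (2.5 * 0.63)⁻¹ := by
            apply inv_anti₀ (by norm_num) (by nlinarith)
          calc (Real.sqrt (2*π) * x₀)⁻¹ * Real.exp (-(x₀^2)/2)
              ≤ (2.5*0.63)⁻¹ * (1.65 * (δ/1.25)) := by
                apply mul_le_mul hinv _ (by positivity) (by norm_num)
                calc Real.exp (-(x₀^2)/2) ≤ Real.exp (1/2) * Real.exp (-(c^2)/2) := he1
                  _ ≤ 1.65 * (δ/1.25) := by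
                      have he3 : Real.exp (-(c^2)/2) ≤ δ/1.25 := by
                        rw [le_div_iff₀ (show (0:ℝ) < 1.25 by norm_num)]
                        linarith
                      exact mul_le_mul he2 he3 (le_of_lt (Real.exp_pos _)) (by norm_num)
            _ ≤ δ := by
                have h1 : ((2.5:ℝ)*0.63)⁻¹ * (1.65 * (δ/1.25)) =
                    (((2.5:ℝ)*0.63)⁻¹ * (1.65/1.25)) * δ := by ring
                have h2 : (((2.5:ℝ)*0.63)⁻¹ * (1.65/1.25)) ≤ 1 := by norm_num
                rw [h1]
                nlinarith [hδ0]

lemma gauss_core (v : ℝ≥0) (hv : v ≠ 0) (t ε δ' : ℝ) (B : Set ℝ)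
    (htail : gaussianReal 0 v {z : ℝ | z * t > (v:ℝ)*ε - t^2/2} ≤ ENNReal.ofReal δ') :
    gaussianReal t v B ≤ ENNReal.ofReal (Real.exp ε) * gaussianReal 0 v B + ENNReal.ofReal δ' := by
  have hv0 : (0:ℝ) < (v:ℝ) := lt_of_le_of_ne v.2 (by exact_mod_cast (Ne.symm hv))
  set E : Set ℝ := {w : ℝ | 2*w*t - t^2 > 2*(v:ℝ)*ε} with hE
  have hEm : MeasurableSet E := by
    have : E = {w : ℝ | 2*(v:ℝ)*ε < 2*w*t - t^2} := rfl
    rw [this]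
    exact measurableSet_lt measurable_const (by fun_prop)
  have hgood : gaussianReal t v (B ∩ Eᶜ) ≤ ENNReal.ofReal (Real.exp ε) * gaussianReal 0 v B := by
    rw [gaussianReal_apply _ hv]
    calc ∫⁻ x in B ∩ Eᶜ, gaussianPDF t v x
        ≤ ∫⁻ x in B ∩ Eᶜ, ENNReal.ofReal (Real.exp ε) * gaussianPDF 0 v x := by
          apply setLIntegral_mono (Measurable.const_mul (measurable_gaussianPDF 0 v) _)
          intro x hx
          have hxE : ¬ (2*x*t - t^2 > 2*(v:ℝ)*ε) := hx.2
          push_neg at hxE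
          rw [gaussianPDF, gaussianPDF, ← ENNReal.ofReal_mul (le_of_lt (Real.exp_pos ε))]
          apply ENNReal.ofReal_le_ofReal
          rw [gaussianPDFReal, gaussianPDFReal, sub_zero, mul_comm (Real.exp ε)]
          have hee : Real.exp (-(x - t)^2 / (2*(v:ℝ))) ≤
              Real.exp (-x^2/(2*(v:ℝ))) * Real.exp ε := by
            rw [← Real.exp_add, Real.exp_le_exp, ← sub_nonneg]
            have heq : -x^2/(2*(v:ℝ)) + ε - (-(x-t)^2/(2*(v:ℝ)))
                = (2*(v:ℝ)*ε - (2*x*t - t^2))/(2*(v:ℝ)) := by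
              field_simp
              ring
            rw [heq]
            apply div_nonneg _ (by positivity)
            linarith
          calc (√(2 * π * (v:ℝ)))⁻¹ * Real.exp (-(x - t)^2 / (2*(v:ℝ)))
              ≤ (√(2 * π * (v:ℝ)))⁻¹ * (Real.exp (-x^2/(2*(v:ℝ))) * Real.exp ε) :=
                mul_le_mul_of_nonneg_left hee (inv_nonneg.2 (Real.sqrt_nonneg _))
            _ = (√(2 * π * (v:ℝ)))⁻¹ * Real.exp (-x^2/(2*(v:ℝ))) * Real.exp ε :=
                (mul_assoc _ _ _).symm
      _ = ENNReal.ofReal (Real.exp ε) * ∫⁻ x in B ∩ Eᶜ, gaussianPDF 0 v x :=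
          lintegral_const_mul' _ _ ENNReal.ofReal_ne_top
      _ ≤ ENNReal.ofReal (Real.exp ε) * gaussianReal 0 v B := by
          apply mul_le_mul_right
          rw [gaussianReal_apply _ hv]
          exact lintegral_mono_set inter_subset_left
  have hbad : gaussianReal t v E ≤ ENNReal.ofReal δ' := by
    have hmap : gaussianReal t v = (gaussianReal 0 v).map (· + t) := by
      rw [gaussianReal_map_add_const, zero_add]
    rw [hmap, Measure.map_apply (measurable_add_const t) hEm]
    have hset : (· + t) ⁻¹' E = {z : ℝ | z * t > (v:ℝ)*ε - t^2/2} := by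
      ext z
      simp only [hE, mem_preimage, mem_setOf_eq]
      constructor <;> intro h <;> nlinarith
    rw [hset]
    exact htail
  calc gaussianReal t v B ≤ gaussianReal t v ((B ∩ Eᶜ) ∪ E) :=
        measure_mono (fun x hx => by by_cases hxE : x ∈ E
                                     · exact Or.inr hxE
                                     · exact Or.inl ⟨hx, hxE⟩)
    _ ≤ gaussianReal t v (B ∩ Eᶜ) + gaussianReal t v E := measure_union_le _ _
    _ ≤ ENNReal.ofReal (Real.exp ε) * gaussianReal 0 v B + ENNReal.ofReal δ' :=
        add_le_add hgood hbad

lemma gauss_tailset {σ c δ ε β t : ℝ} (hβ : 0 < β) (hε : ε ∈ Set.Ioo (0:ℝ) 1)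
    (hδ : δ ∈ Set.Ioo (0:ℝ) 1) (hc0 : 0 < c) (hc : c^2 > 2 * Real.log (1.25/δ))
    (hσ : σ ≥ c * β / ε) (ht : |t| ≤ β) :
    gaussianReal 0 (Real.toNNReal (σ^2))
        {z : ℝ | z * t > ((Real.toNNReal (σ^2) : ℝ≥0) : ℝ)*ε - t^2/2} ≤ ENNReal.ofReal δ := by
  have hε0 : 0 < ε := hε.1
  have hε1 : ε < 1 := hε.2
  have hσ0 : 0 < σ := lt_of_lt_of_le (by positivity) hσ
  have hvr : ((Real.toNNReal (σ^2) : ℝ≥0) : ℝ) = σ^2 := Real.coe_toNNReal _ (sq_nonneg σ)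
  rw [hvr]
  have hcb : c * β ≤ σ * ε := by
    rw [ge_iff_le, div_le_iff₀ hε0] at hσ
    linarith
  have hkey : ∀ u : ℝ, 0 < u → u ≤ β → σ*(c - 1/(2*c)) ≤ (σ^2*ε - u^2/2)/u := by
    intro u hu huβ
    rw [le_div_iff₀ hu]
    have h1 : u * u ≤ u * β := by nlinarith
    have h2 : c * (u * β) ≤ u * (σ * ε) := by nlinarith
    have h3 : u * (σ * ε) ≤ u * σ := by nlinarith [mul_pos hu hσ0]
    have h4 : σ * c * u ≤ σ * c * β := by nlinarith [mul_pos hσ0 hc0]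
    have h5 : σ * (c * β) ≤ σ * (σ * ε) := by nlinarith
    have h6 : c * (u*u) ≤ u * σ := by nlinarith
    have hgoal : (σ*(c - 1/(2*c))) * u = σ*c*u - σ*u/(2*c) := by
      field_simp
    rw [hgoal]
    have h7 : u^2/2 - σ*u/(2*c) ≤ 0 := by
      rw [sub_nonpos, div_le_div_iff₀ (by norm_num) (by positivity)]
      nlinarith
    nlinarith
  rcases lt_trichotomy t 0 with htneg | htzero | htposs
  · -- t < 0
    have ht0 : t ≠ 0 := ne_of_lt htneg
    have hset : {z : ℝ | z * t > σ^2*ε - t^2/2} = Iio ((σ^2*ε - t^2/2)/t) := by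
      ext z
      simp only [mem_setOf_eq, mem_Iio]
      rw [gt_iff_lt, lt_div_iff_of_neg htneg]
    rw [hset, gauss_Iio]
    have hmt : 0 < -t := by linarith
    have hmtβ : -t ≤ β := by
      rw [abs_of_neg htneg] at ht
      exact ht
    have heq : -((σ^2*ε - t^2/2)/t) = (σ^2*ε - (-t)^2/2)/(-t) := by
      field_simp
    have hkey2 := hkey (-t) hmt hmtβ
    apply gauss_Q_le hσ0 hc0 hδ hc
    rw [heq]
    exact hkey2
  · -- t = 0
    have hset : {z : ℝ | z * t > σ^2*ε - t^2/2} = ∅ := by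
      ext z
      simp only [htzero, mul_zero, mem_setOf_eq, mem_empty_iff_false, iff_false, not_lt]
      nlinarith
    rw [hset]
    simp
  · -- t > 0
    have hset : {z : ℝ | z * t > σ^2*ε - t^2/2} = Ioi ((σ^2*ε - t^2/2)/t) := by
      ext z
      simp only [mem_setOf_eq, mem_Ioi]
      rw [gt_iff_lt, div_lt_iff₀ htposs]
    rw [hset]
    apply gauss_Q_le hσ0 hc0 hδ hc
    apply hkey t htposs
    rw [abs_of_pos htposs] at ht
    exact ht

end SmoothSensDP

namespace SmoothSens

variable {N : ℕ} {α : Type} [DecidableEq α]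

lemma LS_nonneg (f : (Fin N → α) → ℝ) (D : Fin N → α) : 0 ≤ LS f D :=
  Real.iSup_nonneg (fun _ => abs_nonneg _)

lemma Sstar_le_exp_mul (f : (Fin N → α) → ℝ) {β : ℝ} (hβ : 0 < β)
    (hfin : ∀ D : Fin N → α,
      BddAbove (Set.range fun D' : Fin N → α =>
        LS f D' * Real.exp (-β * (hammingDist D D' : ℝ))))
    {D D' : Fin N → α} (h : hammingDist D D' = 1) :
    Sstar f β D ≤ Real.exp β * Sstar f β D' := by
  have : Nonempty (Fin N → α) := ⟨D⟩
  rw [Sstar]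
  apply ciSup_le
  intro E
  have htri : (hammingDist D' E : ℝ) ≤ 1 + (hammingDist D E : ℝ) := by
    have := hammingDist_triangle D' D E
    rw [hammingDist_comm D' D, h] at this
    exact_mod_cast this
  have hexp : Real.exp (-β * (hammingDist D E : ℝ)) ≤
      Real.exp β * Real.exp (-β * (hammingDist D' E : ℝ)) := by
    rw [← Real.exp_add, Real.exp_le_exp]
    nlinarith
  calc LS f E * Real.exp (-β * (hammingDist D E : ℝ))
      ≤ LS f E * (Real.exp β * Real.exp (-β * (hammingDist D' E : ℝ))) :=
        mul_le_mul_of_nonneg_left hexp (LS_nonneg f E)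
    _ = Real.exp β * (LS f E * Real.exp (-β * (hammingDist D' E : ℝ))) := by ring
    _ ≤ Real.exp β * Sstar f β D' := by
        apply mul_le_mul_of_nonneg_left _ (le_of_lt (Real.exp_pos β))
        exact le_ciSup (hfin D') E

lemma abs_log_Sstar_sub_le (f : (Fin N → α) → ℝ) {β : ℝ} (hβ : 0 < β)
    (hfin : ∀ D : Fin N → α,
      BddAbove (Set.range fun D' : Fin N → α =>
        LS f D' * Real.exp (-β * (hammingDist D D' : ℝ))))
    (hpos : ∀ D : Fin N → α, 0 < Sstar f β D)
    {D D' : Fin N → α} (h : hammingDist D D' = 1) :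
    |Real.log (Sstar f β D) - Real.log (Sstar f β D')| ≤ β := by
  rw [abs_sub_le_iff]
  constructor
  · have h1 := Sstar_le_exp_mul f hβ hfin h
    have h2 := Real.log_le_log (hpos D) h1
    rw [Real.log_mul (ne_of_gt (Real.exp_pos β)) (ne_of_gt (hpos D')), Real.log_exp] at h2
    linarith
  · have h1 := Sstar_le_exp_mul f hβ hfin (by rw [hammingDist_comm]; exact h)
    have h2 := Real.log_le_log (hpos D') h1
    rw [Real.log_mul (ne_of_gt (Real.exp_pos β)) (ne_of_gt (hpos D)), Real.log_exp] at h2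
    linarith

end SmoothSens

open SmoothSens in
theorem privSmoothSensMech_differentially_private
    {N : ℕ} {α : Type} [DecidableEq α] (f : (Fin N → α) → ℝ) {β : ℝ} (hβ : 0 < β)
    (hfin : ∀ D : Fin N → α,
      BddAbove (Set.range fun D' : Fin N → α =>
        LS f D' * Real.exp (-β * (hammingDist D D' : ℝ))))
    (hpos : ∀ D : Fin N → α, 0 < Sstar f β D)
    {ε δ : ℝ} (hε : ε ∈ Set.Ioo (0 : ℝ) 1) (hδ : δ ∈ Set.Ioo (0 : ℝ) 1)
    {c : ℝ} (hc0 : 0 < c) (hc : c ^ 2 > 2 * Real.log (1.25 / δ))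
    {σ : ℝ} (hσ : σ ≥ c * β / ε) :
    ∀ D D' : Fin N → α, hammingDist D D' = 1 →
      ∀ S : Set ℝ, MeasurableSet S →
        privSmoothSensMech f β σ D S ≤
          ENNReal.ofReal (Real.exp ε) * privSmoothSensMech f β σ D' S +
            ENNReal.ofReal δ := by
  intro D D' hDD' S hS
  have hε0 : 0 < ε := hε.1
  have hσ0 : 0 < σ := lt_of_lt_of_le (by positivity) hσ
  set v : ℝ≥0 := Real.toNNReal (σ^2) with hvdef
  have hvr : (v:ℝ) = σ^2 := Real.coe_toNNReal _ (sq_nonneg σ)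
  have hv : v ≠ 0 := by
    intro h
    rw [h] at hvr
    simp at hvr
    nlinarith
  set t : ℝ := Real.log (Sstar f β D) - Real.log (Sstar f β D') with htdef
  have ht : |t| ≤ β := abs_log_Sstar_sub_le f hβ hfin hpos hDD'
  set g : ℝ → ℝ := fun z => Real.exp (Real.log (Sstar f β D') + z - σ^2/2) with hgdef
  have hgm : Measurable g := by
    apply Real.measurable_exp.comp
    exact (measurable_const.add measurable_id).sub measurable_const
  have hmapD : privSmoothSensMech f β σ D = (gaussianReal t v).map g := by
    have h1 : gaussianReal t v = (gaussianReal 0 v).map (· + t) := by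
      rw [gaussianReal_map_add_const, zero_add]
    have hfeq : (fun z => Real.exp (Real.log (Sstar f β D) + z - σ ^ 2 / 2))
        = g ∘ (· + t) := by
      funext z
      simp only [Function.comp_apply, hgdef]
      congr 1
      rw [htdef]
      ring
    rw [privSmoothSensMech, hfeq, ← Measure.map_map hgm (measurable_add_const t), ← h1]
  have hmapD' : privSmoothSensMech f β σ D' = (gaussianReal 0 v).map g := by
    rw [privSmoothSensMech]
  rw [hmapD, hmapD', Measure.map_apply hgm hS, Measure.map_apply hgm hS]
  exact SmoothSensDP.gauss_core v hv t ε δ _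
    (SmoothSensDP.gauss_tailset hβ hε hδ hc0 hc hσ ht)
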